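/- arXiv:2404.05771 — 4 statements merged into one kernel-verified Lean document; each statement's English description precedes it below -/
import Mathlib

section
/- Let n be a positive integer that is an odd square, divisible by 5, with σ(n)/n = 9/5 (i.e., n is a friend of 10). If q₂ is the second smallest prime divisor of n and ω(n) is the number of distinct prime divisors of n, then q₂ < p_{⌈7ω(n)/3⌉}, where p_k denotes the k-th prime. -/
/-!
Write ω = #n.primeFactors, K = ⌈7ω/3⌉ and a = K - 1, and suppose q₂ ≥ p_K. The ω - 1 prime
factors of n from q₂ on are distinct odd numbers, all at least p_K ≥ 2a + 1, so the product of
p/(p - 1) over them is at most ∏_{i < ω-1} (2(a+i) + 1)/(2(a+i)). Each squared factor is at most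
(2(a+i) + 1)/(2(a+i) - 1), and these telescope to (2a + 2ω - 3)/(2a - 1) ≤ (6/5)². Since
q₁/(q₁ - 1) ≤ 3/2 for the odd prime q₁, this gives
9/5 = σ(n)/n < ∏_{p ∣ n} p/(p - 1) ≤ 3/2 · 6/5 = 9/5.
-/

open ArithmeticFunction Finset
open scoped ArithmeticFunction.sigma

namespace Nat

lemma odd_nth_prime {i : ℕ} (hi : i ≠ 0) : Odd (nth Prime i) := by
  refine (prime_nth_prime i).odd_of_ne_two (ne_of_gt ?_)
  rw [← nth_prime_zero_eq_two]
  exact nth_strictMono infinite_setOfPred_prime (pos_of_ne_zero hi)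

lemma two_mul_add_one_le_nth_prime {i : ℕ} (hi : 1 ≤ i) : 2 * i + 1 ≤ nth Prime i := by
  induction i, hi using le_induction with
  | base => simp [nth_prime_one_eq_three]
  | succ i hi ih =>
    have hlt : nth Prime i < nth Prime (i + 1) :=
      nth_strictMono infinite_setOfPred_prime (lt_add_one i)
    obtain ⟨k, hk⟩ := odd_nth_prime (i := i) (by omega)
    obtain ⟨l, hl⟩ := odd_nth_prime (i := i + 1) (by omega)
    omega

lemma Prime.sigma_one_pow_div_lt {p : ℕ} (hp : p.Prime) (e : ℕ) :
    (σ 1 (p ^ e) : ℚ) / (p ^ e : ℕ) < p / (p - 1) := by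
  have hp1 : (1 : ℚ) < p := by exact_mod_cast hp.one_lt
  rw [sigma_one_apply_prime_pow hp, div_lt_div_iff₀ (by exact_mod_cast pow_pos hp.pos e)
    (by linarith)]
  push_cast
  rw [geom_sum_mul, pow_succ]
  linarith [pow_pos (by linarith : (0 : ℚ) < p) e]

end Nat

lemma sigma_one_div_lt_prod_primeFactors {n : ℕ} (hn : n.primeFactors.Nonempty) :
    (σ 1 n : ℚ) / n < ∏ p ∈ n.primeFactors, (p : ℚ) / (p - 1) := by
  have hn0 : n ≠ 0 := by rintro rfl; simp at hn
  have hfac : (σ 1 n : ℚ) / n =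
      ∏ p ∈ n.primeFactors,
        (σ 1 (p ^ n.factorization p) : ℚ) / (p ^ n.factorization p : ℕ) := by
    rw [prod_div_distrib, isMultiplicative_sigma.multiplicative_factorization _ hn0,
      Nat.prod_factorization_eq_prod_primeFactors]
    conv_lhs => enter [2]; rw [Nat.prod_primeFactors_pow_factorization hn0]
    push_cast
    rfl
  rw [hfac]
  exact prod_lt_prod_of_nonempty (fun p hp => by
      have := (Nat.prime_of_mem_primeFactors hp).pos
      have := sigma_pos 1 (p ^ n.factorization p) (by positivity)
      positivity)
    (fun p hp => (Nat.prime_of_mem_primeFactors hp).sigma_one_pow_div_lt _) hn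

lemma Finset.prod_le_prod_range_of_antitoneOn {R : Type*} [CommSemiring R] [PartialOrder R]
    [IsOrderedRing R] {f : ℕ → R} {a : ℕ} (hf : AntitoneOn f (Set.Ici a))
    (hf0 : ∀ x, a ≤ x → 0 ≤ f x) {s : Finset ℕ} (hs : ∀ x ∈ s, a ≤ x) :
    ∏ x ∈ s, f x ≤ ∏ i ∈ range #s, f (a + i) := by
  induction s using Finset.induction_on_max with
  | empty => simp
  | insert b s hb ih =>
    have hbs : b ∉ s := fun h => lt_irrefl b (hb b h)
    have hab : a ≤ b := hs b (mem_insert_self b s)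
    have hcard : a + #s ≤ b := by
      have := card_le_card fun x hx => mem_Ico.2 ⟨hs x (mem_insert_of_mem hx), hb x hx⟩
      rw [Nat.card_Ico] at this
      omega
    rw [prod_insert hbs, card_insert_of_notMem hbs, prod_range_succ, mul_comm]
    exact mul_le_mul (ih fun x hx => hs x (mem_insert_of_mem hx))
      (hf (Set.mem_Ici.2 (by omega)) hab hcard) (hf0 b hab)
      (prod_nonneg fun i _ => hf0 _ (by omega))

lemma sq_prod_range_odd_div_even_le {a : ℕ} (ha : 1 ≤ a) (m : ℕ) :
    (∏ i ∈ range m, (2 * (a + i) + 1 : ℚ) / (2 * (a + i))) ^ 2 ≤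
      (2 * (a + m) - 1) / (2 * a - 1) := by
  have ha' : (1 : ℚ) ≤ a := by exact_mod_cast ha
  have hterm (c : ℚ) (hc : 1 ≤ c) :
      ((2 * c + 1) / (2 * c)) ^ 2 ≤ (2 * c + 1) / (2 * c - 1) := by
    rw [div_pow, div_le_div_iff₀ (by positivity) (by linarith)]
    nlinarith
  have htel (m : ℕ) : ∏ i ∈ range m, (2 * (a + i) + 1 : ℚ) / (2 * (a + i) - 1) =
      (2 * (a + m) - 1) / (2 * a - 1) := by
    induction m with
    | zero => simp [div_self (by linarith : (2 * a - 1 : ℚ) ≠ 0)]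
    | succ m ih =>
      rw [prod_range_succ, ih]
      have : (0 : ℚ) < 2 * (a + m) - 1 := by linarith [m.cast_nonneg (α := ℚ)]
      field_simp
      push_cast
      ring
  rw [← prod_pow, ← htel]
  exact prod_le_prod (fun i _ => by positivity) fun i _ => hterm _ (by linarith)

lemma prod_div_sub_one_le_of_odd {a : ℕ} (ha : 1 ≤ a) {s : Finset ℕ}
    (hodd : ∀ p ∈ s, Odd p) (hs : ∀ p ∈ s, 2 * a + 1 ≤ p) :
    ∏ p ∈ s, (p : ℚ) / (p - 1) ≤
      ∏ i ∈ range #s, (2 * (a + i) + 1 : ℚ) / (2 * (a + i)) := by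
  have hhalf : ∀ p ∈ s, 2 * (p / 2) + 1 = p := fun p hp => by
    obtain ⟨k, rfl⟩ := hodd p hp; omega
  have hinj : Set.InjOn (· / 2) s := fun p hp q hq h => by
    rw [← hhalf p hp, ← hhalf q hq]
    exact congrArg (2 * · + 1) h
  have hanti : AntitoneOn (fun c : ℕ => (2 * c + 1 : ℚ) / (2 * c)) (Set.Ici a) := by
    intro c hc d hd hcd
    have hc' : (1 : ℚ) ≤ c := by exact_mod_cast ha.trans hc
    have hcd' : (c : ℚ) ≤ d := by exact_mod_cast hcd
    dsimp only
    rw [div_le_div_iff₀ (by linarith) (by linarith)]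
    nlinarith
  calc ∏ p ∈ s, (p : ℚ) / (p - 1)
      = ∏ c ∈ s.image (· / 2), (2 * ((c : ℕ) : ℚ) + 1) / (2 * (c : ℕ)) := by
        rw [prod_image hinj]
        refine prod_congr rfl fun p hp => ?_
        conv_lhs => rw [← hhalf p hp]
        push_cast
        ring
    _ ≤ ∏ i ∈ range #(s.image (· / 2)),
          (2 * ((a + i : ℕ) : ℚ) + 1) / (2 * (a + i : ℕ)) :=
        prod_le_prod_range_of_antitoneOn hanti (fun x _ => by positivity) (by
          simp only [mem_image]
          rintro _ ⟨p, hp, rfl⟩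
          have := hs p hp
          omega)
    _ = _ := by
        rw [card_image_of_injOn hinj]
        push_cast
        rfl

lemma prod_range_odd_div_even_le_six_fifths {a m : ℕ} (h : 7 * (m + 1) ≤ 3 * (a + 1)) :
    ∏ i ∈ range m, (2 * (a + i) + 1 : ℚ) / (2 * (a + i)) ≤ 6 / 5 := by
  have ha : (1 : ℚ) ≤ a := by exact_mod_cast (by omega : 1 ≤ a)
  have hm : (50 * m + 11 : ℚ) ≤ 22 * a := by
    exact_mod_cast (by omega : 50 * m + 11 ≤ 22 * a)
  have hsq : (2 * (a + m) - 1 : ℚ) / (2 * a - 1) ≤ (6 / 5) ^ 2 := by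
    rw [div_le_iff₀ (by linarith)]
    linarith
  rw [← pow_le_pow_iff_left₀ (prod_nonneg fun i _ => by positivity) (by norm_num) two_ne_zero]
  exact (sq_prod_range_odd_div_even_le (by exact_mod_cast ha) m).trans hsq

lemma seven_mul_le_three_mul_toNat_ceil (w : ℕ) :
    7 * w ≤ 3 * (⌈(7 * (w : ℚ)) / 3⌉).toNat := by
  have h : (7 * w : ℚ) / 3 ≤ (⌈(7 * (w : ℚ)) / 3⌉).toNat :=
    Int.ceil_toNat (α := ℚ) _ ▸ Nat.le_ceil _
  exact_mod_cast (by linarith : (7 * w : ℚ) ≤ 3 * (⌈(7 * (w : ℚ)) / 3⌉).toNat)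

theorem second_prime_bound_general (n : ℕ) (hodd : Odd n)
    (habund : (σ 1 n : ℚ) / n = 9 / 5) (q₂ : ℕ)
    (hq₂ : q₂ ∈ n.primeFactors) (hsecond : (n.primeFactors.filter (· < q₂)).card = 1) :
    q₂ < Nat.nth Nat.Prime ((⌈(7 * (n.primeFactors.card : ℚ)) / 3⌉).toNat - 1) := by
  set S := n.primeFactors
  have hodd_of_mem (p : ℕ) (hp : p ∈ S) : Odd p :=
    hodd.of_dvd_nat (Nat.dvd_of_mem_primeFactors hp)
  have hS : 1 ≤ #S := card_pos.2 ⟨q₂, hq₂⟩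
  have hK := seven_mul_le_three_mul_toNat_ceil #S
  set a := (⌈(7 * (#S : ℚ)) / 3⌉).toNat - 1
  by_contra! hle
  obtain ⟨q₁, hq₁⟩ := card_eq_one.mp hsecond
  have hq₁S : q₁ ∈ S := mem_of_mem_filter q₁ (hq₁ ▸ mem_singleton_self q₁)
  have hq₁3 : (3 : ℚ) ≤ q₁ := by
    obtain ⟨k, hk⟩ := hodd_of_mem q₁ hq₁S
    exact_mod_cast (by grind [(Nat.prime_of_mem_primeFactors hq₁S).two_le] : 3 ≤ q₁)
  set T := S.filter (¬ · < q₂)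
  have hT : #T + 1 = #S := by
    have := card_filter_add_card_filter_not (s := S) (· < q₂)
    simp only [T]
    omega
  have hlt : (9 : ℚ) / 5 < q₁ / (q₁ - 1) * ∏ p ∈ T, (p : ℚ) / (p - 1) := by
    rw [← habund, ← prod_singleton (fun p : ℕ => (p : ℚ) / (p - 1)) q₁, ← hq₁,
      prod_filter_mul_prod_filter_not]
    exact sigma_one_div_lt_prod_primeFactors ⟨q₂, hq₂⟩
  have hTle : ∏ p ∈ T, (p : ℚ) / (p - 1) ≤ 6 / 5 :=
    (prod_div_sub_one_le_of_odd (s := T) (by omega)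
      (fun p hp => hodd_of_mem p (mem_of_mem_filter p hp))
      fun p hp => (Nat.two_mul_add_one_le_nth_prime (by omega)).trans
        (hle.trans (not_lt.1 (mem_filter.1 hp).2))).trans
    (prod_range_odd_div_even_le_six_fifths (by omega))
  have hq₁_le : (q₁ : ℚ) / (q₁ - 1) ≤ 3 / 2 := by
    rw [div_le_div_iff₀ (by linarith) (by norm_num)]
    linarith
  have hq₁_nonneg : (0 : ℚ) ≤ q₁ / (q₁ - 1) := div_nonneg (by positivity) (by linarith)
  linarith [mul_le_mul_of_nonneg_left hTle hq₁_nonneg]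

theorem second_prime_bound (n : ℕ) (hn : 0 < n) (hodd : Odd n) (hsq : IsSquare n)
    (h5 : 5 ∣ n) (habund : (σ 1 n : ℚ) / n = 9 / 5) (q₂ : ℕ)
    (hq₂ : q₂ ∈ n.primeFactors) (hsecond : (n.primeFactors.filter (· < q₂)).card = 1) :
    q₂ < Nat.nth Nat.Prime ((⌈(7 * (n.primeFactors.card : ℚ)) / 3⌉).toNat - 1) :=
  second_prime_bound_general n hodd habund q₂ hq₂ hsecond
end

section
/- Let n be a positive integer that is an odd square, divisible by 5, with σ(n)/n = 9/5. If q₂ is the second smallest prime divisor of n, then 7 ≤ q₂ < ⌈7ω(n)/3⌉·(log(⌈7ω(n)/3⌉) + 2·log log(⌈7ω(n)/3⌉)). -/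
/-!
An odd square `n` with `σ(n)/n = 9/5` and `5 ∣ n` is prime to `3`: otherwise it would have a
divisor of abundancy index above `9/5`, namely `3⁴·5²`, or `3²·5²·13²` when `3² ∥ n` (then
`13 = σ(3²)` divides `5σ(n) = 9n`). So `5` is the least prime factor of `n` and `q₂ ≥ 7`.
Since `σ(n)φ(n) < n²`, we get `∏_{p ∣ n} (1 - 1/p) = φ(n)/n < 5/9`; the factor at `5` is `4/5`,
and by Bernoulli's inequality the other `ω(n) - 1` factors have product at least
`1 - (ω(n) - 1)/q₂`. Hence `q₂ < 36(ω(n) - 1)/11 < (3/2)⌈7ω(n)/3⌉`, and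
`3/2 < log x + 2 log log x` for `x ≥ 5`.
-/

open ArithmeticFunction Finset
open scoped ArithmeticFunction.sigma

namespace Nat

lemma sigma_one_mul_totient_prime_pow_lt {p k : ℕ} (hp : p.Prime) (hk : k ≠ 0) :
    σ 1 (p ^ k) * φ (p ^ k) < (p ^ k) ^ 2 := by
  obtain ⟨j, rfl⟩ := exists_eq_succ_of_ne_zero hk
  obtain ⟨x, rfl⟩ : ∃ x, p = x + 1 := ⟨p - 1, by have := hp.pos; omega⟩
  rw [totient_prime_pow_succ hp, sigma_one_apply_prime_pow hp, add_tsub_cancel_right]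
  set A := ∑ i ∈ range (j + 1 + 1), (x + 1) ^ i
  have hA : A * x + 1 = (x + 1) ^ (j + 2) := geom_sum_mul_add x (j + 2)
  have hpos : 0 < (x + 1) ^ j := by positivity
  calc A * ((x + 1) ^ j * x) < A * ((x + 1) ^ j * x) + (x + 1) ^ j := by omega
    _ = (A * x + 1) * (x + 1) ^ j := by ring
    _ = ((x + 1) ^ (j + 1)) ^ 2 := by rw [hA]; ring

lemma sigma_one_mul_totient_lt_sq {n : ℕ} (hn : 1 < n) : σ 1 n * φ n < n ^ 2 := by
  have hn0 : n ≠ 0 := by omega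
  have hmul : ∀ a b, Coprime a b → σ 1 (a * b) * φ (a * b) = σ 1 a * φ a * (σ 1 b * φ b) := by
    intro a b hab
    rw [isMultiplicative_sigma.map_mul_of_coprime hab, totient_mul hab]
    ring
  have hσφ : σ 1 n * φ n = ∏ p ∈ n.primeFactors,
      σ 1 (p ^ n.factorization p) * φ (p ^ n.factorization p) := by
    rw [multiplicative_factorization (fun m ↦ σ 1 m * φ m) hmul (by simp) hn0,
      prod_factorization_eq_prod_primeFactors]
  have hsq : n ^ 2 = ∏ p ∈ n.primeFactors, (p ^ n.factorization p) ^ 2 := by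
    rw [prod_pow, ← prod_factorization_eq_prod_primeFactors, prod_factorization_pow_eq_self hn0]
  rw [hσφ, hsq]
  refine prod_lt_prod_of_nonempty (fun p hp ↦ ?_) (fun p hp ↦ ?_) (nonempty_primeFactors.mpr hn)
  · have := (prime_of_mem_primeFactors hp).pos
    exact mul_pos (sigma_pos _ _ (by positivity)) (totient_pos.mpr (by positivity))
  · exact sigma_one_mul_totient_prime_pow_lt (prime_of_mem_primeFactors hp)
      (Finsupp.mem_support_iff.mp hp)

lemma abundancyIndex_eq_sigma_one_div (n : ℕ) : n.abundancyIndex = σ 1 n / n := by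
  simp [abundancyIndex, sigma_one_apply]

lemma prod_primeFactors_one_sub_inv_lt_inv_abundancyIndex {n : ℕ} (hn : 1 < n) :
    ∏ p ∈ n.primeFactors, (1 - (p : ℚ)⁻¹) < n.abundancyIndex⁻¹ := by
  have hn0 : (0 : ℚ) < n := by positivity
  have hσ : (0 : ℚ) < σ 1 n := by exact_mod_cast sigma_pos 1 n (by omega)
  have hlt : (σ 1 n : ℚ) * φ n < n ^ 2 := by exact_mod_cast sigma_one_mul_totient_lt_sq hn
  rw [abundancyIndex_eq_sigma_one_div, inv_div, lt_div_iff₀ hσ]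
  rw [totient_eq_mul_prod_factors] at hlt
  nlinarith

lemma one_sub_card_div_le_prod_one_sub_inv {s : Finset ℕ} {q : ℕ} (hq : 0 < q)
    (hs : ∀ p ∈ s, q ≤ p) : 1 - (#s : ℚ) / q ≤ ∏ p ∈ s, (1 - (p : ℚ)⁻¹) := by
  have hq1 : (q : ℚ)⁻¹ ≤ 1 := inv_le_one_of_one_le₀ (by exact_mod_cast hq)
  calc 1 - (#s : ℚ) / q = 1 + #s * -(q : ℚ)⁻¹ := by ring
    _ ≤ (1 + -(q : ℚ)⁻¹) ^ #s := one_add_mul_le_pow (by linarith) _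
    _ = ∏ _p ∈ s, (1 - (q : ℚ)⁻¹) := by rw [prod_const]; ring
    _ ≤ ∏ p ∈ s, (1 - (p : ℚ)⁻¹) := by
      refine prod_le_prod (fun _ _ ↦ by linarith) (fun p hp ↦ ?_)
      gcongr
      exact_mod_cast hs p hp

lemma one_sub_inv_mul_one_sub_card_div_lt_inv_abundancyIndex {n p q : ℕ} (hn : 1 < n)
    (hp : p ∈ n.primeFactors) (hq : 0 < q) (hge : ∀ r ∈ n.primeFactors.erase p, q ≤ r) :
    (1 - (p : ℚ)⁻¹) * (1 - #(n.primeFactors.erase p) / q) < n.abundancyIndex⁻¹ := by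
  have hp_one : (1 : ℚ) ≤ p := by exact_mod_cast (prime_of_mem_primeFactors hp).one_le
  have hp1 : 0 ≤ 1 - (p : ℚ)⁻¹ := sub_nonneg.mpr (inv_le_one_of_one_le₀ hp_one)
  calc (1 - (p : ℚ)⁻¹) * (1 - #(n.primeFactors.erase p) / q)
      ≤ (1 - (p : ℚ)⁻¹) * ∏ r ∈ n.primeFactors.erase p, (1 - (r : ℚ)⁻¹) :=
        mul_le_mul_of_nonneg_left (one_sub_card_div_le_prod_one_sub_inv hq hge) hp1
    _ = ∏ r ∈ n.primeFactors, (1 - (r : ℚ)⁻¹) :=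
        mul_prod_erase _ (fun r : ℕ ↦ 1 - (r : ℚ)⁻¹) hp
    _ < n.abundancyIndex⁻¹ := prod_primeFactors_one_sub_inv_lt_inv_abundancyIndex hn

lemma _root_.IsSquare.sq_dvd_of_prime_dvd {n p : ℕ} (hsq : IsSquare n) (hp : p.Prime)
    (h : p ∣ n) : p ^ 2 ∣ n := by
  obtain ⟨r, rfl⟩ := hsq
  obtain hr | hr := hp.dvd_mul.mp h <;> simpa [sq] using mul_dvd_mul hr hr

lemma not_three_dvd_of_abundancyIndex_eq_nine_fifths {n : ℕ} (hn : n ≠ 0) (hsq : IsSquare n)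
    (h5 : 5 ∣ n) (hab : n.abundancyIndex = 9 / 5) : ¬ 3 ∣ n := by
  have not_dvd (d : ℕ) (hd : 9 / 5 < d.abundancyIndex) : ¬ d ∣ n := fun hdn ↦
    (abundancyIndex_le_of_dvd hn hdn).not_gt (hab ▸ hd)
  have heq : 5 * σ 1 n = 9 * n := by
    rw [abundancyIndex_eq_sigma_one_div, div_eq_div_iff (by positivity) (by norm_num)] at hab
    exact_mod_cast (by linarith : (5 : ℚ) * σ 1 n = 9 * n)
  have h25 : 25 ∣ n := hsq.sq_dvd_of_prime_dvd prime_five h5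
  intro h3
  obtain ⟨r, rfl⟩ := id hsq
  have h3r : 3 ∣ r := (prime_three.dvd_mul.mp h3).elim id id
  by_cases h9r : 9 ∣ r
  · refine not_dvd 2025 (by simp [abundancyIndex, divisors_ofNat]; norm_num) ?_
    exact Coprime.mul_dvd_of_dvd_of_dvd (m := 81) (n := 25) (by norm_num)
      (by simpa using mul_dvd_mul h9r h9r) h25
  · obtain ⟨s, rfl⟩ := h3r
    have hcop : Coprime 9 (s * s) := by
      have : ¬ 3 ∣ s := fun h ↦ h9r (by simpa using mul_dvd_mul_left 3 h)
      simpa [sq] using Coprime.pow 2 2 ((prime_three.coprime_iff_not_dvd).mpr this)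
    have hσ : σ 1 (3 * s * (3 * s)) = 13 * σ 1 (s * s) := by
      rw [show 3 * s * (3 * s) = 9 * (s * s) by ring,
        isMultiplicative_sigma.map_mul_of_coprime hcop]
      simp [sigma_one_apply, divisors_ofNat]
    have h13 : 13 ∣ 3 * s * (3 * s) := Coprime.dvd_of_dvd_mul_left (by norm_num : Coprime 13 9)
      ⟨5 * σ 1 (s * s), by rw [← heq, hσ]; ring⟩
    have h169 := hsq.sq_dvd_of_prime_dvd (by norm_num) h13
    have h9 : 9 ∣ 3 * s * (3 * s) := ⟨s * s, by ring⟩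
    refine not_dvd 38025 (by simp [abundancyIndex, divisors_ofNat]; norm_num) ?_
    exact Coprime.mul_dvd_of_dvd_of_dvd (m := 225) (n := 169) (by norm_num)
      (Coprime.mul_dvd_of_dvd_of_dvd (m := 9) (n := 25) (by norm_num) h9 h25) h169

lemma five_le_of_mem_primeFactors {n p : ℕ} (hodd : Odd n) (h3 : ¬ 3 ∣ n)
    (hp : p ∈ n.primeFactors) : 5 ≤ p := by
  obtain ⟨hp, hpn, -⟩ := mem_primeFactors.mp hp
  have h2 : p ≠ 2 := by rintro rfl; exact hodd.not_two_dvd_nat hpn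
  have h3 : p ≠ 3 := by rintro rfl; exact h3 hpn
  have h4 : p ≠ 4 := by rintro rfl; norm_num at hp
  have := hp.two_le
  omega

end Nat

lemma Finset.lt_and_forall_mem_erase_le_of_card_filter_lt_eq_one {α : Type*} [LinearOrder α]
    {s : Finset α} {a q : α} (ha : a ∈ s) (hmin : ∀ p ∈ s, a ≤ p)
    (hq : #(s.filter (· < q)) = 1) : a < q ∧ ∀ p ∈ s.erase a, q ≤ p := by
  obtain ⟨b, hb⟩ := card_eq_one.mp hq
  have hbq : b ∈ s.filter (· < q) := hb ▸ mem_singleton_self b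
  rw [mem_filter] at hbq
  have haq : a < q := (hmin b hbq.1).trans_lt hbq.2
  refine ⟨haq, fun p hp ↦ le_of_not_gt fun hpq ↦ ne_of_mem_erase hp ?_⟩
  have hpf : p ∈ s.filter (· < q) := mem_filter.mpr ⟨mem_of_mem_erase hp, hpq⟩
  have haf : a ∈ s.filter (· < q) := mem_filter.mpr ⟨ha, haq⟩
  rw [hb, mem_singleton] at hpf haf
  rw [hpf, haf]

lemma Real.three_halves_lt_log_five : 3 / 2 < Real.log 5 := by
  rw [Real.lt_log_iff_exp_lt (by norm_num)]
  have h3 : Real.exp (3 / 2) ^ 2 = Real.exp 1 ^ 3 := by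
    rw [← Real.exp_nat_mul, ← Real.exp_nat_mul]; norm_num
  have he : Real.exp 1 ^ 3 < 5 ^ 2 :=
    (pow_lt_pow_left₀ Real.exp_one_lt_d9 (Real.exp_pos 1).le (by norm_num)).trans (by norm_num)
  exact lt_of_pow_lt_pow_left₀ 2 (by norm_num) (h3 ▸ he)

lemma Real.three_halves_mul_lt_mul_log_add_two_mul_log_log {x : ℝ} (hx : 5 ≤ x) :
    3 / 2 * x < x * (Real.log x + 2 * Real.log (Real.log x)) := by
  have hlog : 3 / 2 < Real.log x :=
    Real.three_halves_lt_log_five.trans_le (Real.log_le_log (by norm_num) hx)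
  have hloglog : 0 ≤ Real.log (Real.log x) := Real.log_nonneg (by linarith)
  nlinarith

lemma lt_ceil_mul_log_add_two_mul_log_log {q W : ℕ} (hW : 2 ≤ W) (hq : 11 * q < 36 * (W - 1)) :
    (q : ℝ) < ((⌈(7 * (W : ℚ)) / 3⌉ : ℤ) : ℝ) *
      (Real.log ((⌈(7 * (W : ℚ)) / 3⌉ : ℤ) : ℝ) +
        2 * Real.log (Real.log ((⌈(7 * (W : ℚ)) / 3⌉ : ℤ) : ℝ))) := by
  set c := ⌈(7 * (W : ℚ)) / 3⌉
  have hqR : 11 * (q : ℝ) < 36 * (W - 1) := by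
    have : ((11 * q : ℕ) : ℝ) < ((36 * (W - 1) : ℕ) : ℝ) := by exact_mod_cast hq
    push_cast [Nat.cast_sub (by omega : 1 ≤ W)] at this
    exact this
  have hc : 7 * (W : ℝ) / 3 ≤ c := by
    have := (Rat.cast_le (K := ℝ)).mpr (Int.le_ceil ((7 * (W : ℚ)) / 3))
    push_cast at this
    exact this
  have hc5 : (5 : ℝ) ≤ c := by
    have hWQ : (2 : ℚ) ≤ W := by exact_mod_cast hW
    have : 4 < c := Int.lt_ceil.mpr (by push_cast; linarith)
    exact_mod_cast this
  calc (q : ℝ) < 3 / 2 * c := by linarith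
    _ < _ := Real.three_halves_mul_lt_mul_log_add_two_mul_log_log hc5

theorem second_prime_explicit_bound (n : ℕ) (hn : 0 < n) (hodd : Odd n)
    (hsq : IsSquare n) (h5 : 5 ∣ n) (habund : (σ 1 n : ℚ) / n = 9 / 5) (q₂ : ℕ)
    (hq₂ : q₂ ∈ n.primeFactors) (hsecond : (n.primeFactors.filter (· < q₂)).card = 1) :
    7 ≤ q₂ ∧
      (q₂ : ℝ) < ((⌈(7 * (n.primeFactors.card : ℚ)) / 3⌉ : ℤ) : ℝ) *
        (Real.log ((⌈(7 * (n.primeFactors.card : ℚ)) / 3⌉ : ℤ) : ℝ) +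
          2 * Real.log (Real.log ((⌈(7 * (n.primeFactors.card : ℚ)) / 3⌉ : ℤ) : ℝ))) := by
  have hab : n.abundancyIndex = 9 / 5 := by rwa [Nat.abundancyIndex_eq_sigma_one_div]
  have h5mem : 5 ∈ n.primeFactors := Nat.mem_primeFactors.mpr ⟨Nat.prime_five, h5, hn.ne'⟩
  have h5min : ∀ p ∈ n.primeFactors, 5 ≤ p := fun p ↦ Nat.five_le_of_mem_primeFactors hodd
    (Nat.not_three_dvd_of_abundancyIndex_eq_nine_fifths hn.ne' hsq h5 hab)
  obtain ⟨h5q, hrest⟩ :=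
    Finset.lt_and_forall_mem_erase_le_of_card_filter_lt_eq_one h5mem h5min hsecond
  have h7 : 7 ≤ q₂ := by
    have : q₂ ≠ 6 := by rintro rfl; norm_num at hq₂
    omega
  have hbound := Nat.one_sub_inv_mul_one_sub_card_div_lt_inv_abundancyIndex
    (by have := Nat.le_of_dvd hn h5; omega) h5mem (by omega) hrest
  rw [hab, card_erase_of_mem h5mem] at hbound
  have hW : 2 ≤ #n.primeFactors := one_lt_card.mpr ⟨5, h5mem, q₂, hq₂, by omega⟩
  refine ⟨h7, lt_ceil_mul_log_add_two_mul_log_log hW ?_⟩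
  have hq : (0 : ℚ) < q₂ := by exact_mod_cast (by omega : 0 < q₂)
  push_cast at hbound
  field_simp at hbound
  exact_mod_cast (by linarith : (11 * q₂ : ℚ) < 36 * ((#n.primeFactors - 1 : ℕ) : ℚ))
end

section
/- Let n be an odd positive integer divisible by 5 with ω(n) distinct prime divisors, and suppose the second smallest prime divisor of n is at least p_{⌈7ω(n)/3⌉}. Then σ(n)/n < 25/14; in particular σ(n)/n ≠ 9/5, so n is not a friend of 10. -/
/-!
Since `σ` is multiplicative, `σ(n)/n` is the product over `p ∣ n` of `σ(p^k)/p^k < p/(p-1)`.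
As `q₂ > 5` and only one prime factor lies below `q₂`, that factor is `5`, contributing less
than `5/4`; every other prime factor is at least `q₂ ≥ Nat.nth Nat.Prime a ≥ 2a + 1`, where
`a = ⌈7ω/3⌉ - 1`, and contributes at most `1 + 1/(2a)`. Since `7ω ≤ 3(a + 1)`, Bernoulli's
inequality bounds these `ω - 1` factors by `(1 - 3/14)⁻¹ = 14/11`, so
`σ(n)/n < 5/4 · 14/11 = 35/22 < 25/14`.
-/

open ArithmeticFunction
open scoped ArithmeticFunction.sigma

theorem Nat.two_mul_add_one_le_nth_prime_s18 (k : ℕ) : 2 * k + 1 ≤ Nat.nth Nat.Prime k := by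
  induction k with
  | zero => simp [Nat.nth_prime_zero_eq_two]
  | succ k ih =>
    have hlt : Nat.nth Nat.Prime k < Nat.nth Nat.Prime (k + 1) :=
      Nat.nth_strictMono Nat.infinite_setOfPred_prime k.lt_succ_self
    obtain ⟨m, hm⟩ : Odd (Nat.nth Nat.Prime (k + 1)) :=
      (Nat.prime_nth_prime _).odd_of_ne_two (by have := Nat.add_two_le_nth_prime (k + 1); omega)
    omega

theorem Finset.le_of_card_filter_lt_eq_one {α : Type*} [LinearOrder α] {s : Finset α} {q r : α}
    (h : (s.filter (· < q)).card = 1) (hr : r ∈ s) (hrq : r < q) :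
    ∀ p ∈ s, p ≠ r → q ≤ p := by
  intro p hp hpr
  by_contra! hpq
  exact hpr (Finset.card_le_one.1 h.le p (Finset.mem_filter.2 ⟨hp, hpq⟩) r
    (Finset.mem_filter.2 ⟨hr, hrq⟩))

section OrderedField

variable {K : Type*} [Field K] [LinearOrder K] [IsStrictOrderedRing K]

theorem one_add_pow_le_inv_one_sub_mul {x : K} (hx : 0 ≤ x) {t : ℕ} (htx : t * x < 1) :
    (1 + x) ^ t ≤ (1 - t * x)⁻¹ := by
  rcases t.eq_zero_or_pos with rfl | ht
  · simp
  have hx1 : x < 1 := lt_of_le_of_lt (le_mul_of_one_le_left hx (by exact_mod_cast ht)) htx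
  have bernoulli : 1 - t * x ≤ (1 - x) ^ t := by
    simpa [sub_eq_add_neg] using one_add_mul_le_pow (a := -x) (by linarith) t
  rw [← one_div, le_div_iff₀ (by linarith)]
  calc (1 + x) ^ t * (1 - t * x) ≤ (1 + x) ^ t * (1 - x) ^ t := by gcongr
    _ = (1 - x ^ 2) ^ t := by rw [← mul_pow]; ring
    _ ≤ 1 := pow_le_one₀ (by nlinarith) (by nlinarith)

theorem sigma_one_prime_pow_div_lt {p : ℕ} (hp : p.Prime) (k : ℕ) :
    (σ 1 (p ^ k) : K) / p ^ k < p / (p - 1) := by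
  have hp1 : (1 : K) < p := by exact_mod_cast hp.one_lt
  rw [div_lt_div_iff₀ (by positivity) (by linarith), sigma_one_apply_prime_pow hp]
  push_cast
  rw [geom_sum_mul, pow_succ']
  linarith [pow_pos (zero_lt_one.trans hp1) k]

theorem sigma_one_div_eq_prod_primeFactors {n : ℕ} (hn : n ≠ 0) :
    (σ 1 n : K) / n =
      ∏ p ∈ n.primeFactors, (σ 1 (p ^ n.factorization p) : K) / p ^ n.factorization p := by
  have hmul : ∀ x y : ℕ, x.Coprime y → (σ 1 (x * y) : K) / ↑(x * y) =
      (σ 1 x : K) / x * ((σ 1 y : K) / y) := by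
    intro x y hxy
    rw [isMultiplicative_sigma.map_mul_of_coprime hxy]
    push_cast
    exact mul_div_mul_comm _ _ _ _
  rw [Nat.multiplicative_factorization (fun m => (σ 1 m : K) / m) hmul (by simp) hn,
    Finsupp.prod, Nat.support_factorization]
  push_cast
  rfl

theorem sigma_one_div_lt_of_forall_le {n r m : ℕ} (hr : r ∈ n.primeFactors) (hm : 2 ≤ m)
    (hle : ∀ p ∈ n.primeFactors, p ≠ r → m ≤ p) :
    (σ 1 n : K) / n < r / (r - 1) * (m / (m - 1)) ^ (n.primeFactors.card - 1) := by
  set f : ℕ → K := fun p => (σ 1 (p ^ n.factorization p) : K) / p ^ n.factorization p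
  have hf_pos : ∀ p ∈ n.primeFactors, 0 < f p := fun p hp => by
    have := (Nat.prime_of_mem_primeFactors hp).pos
    positivity
  have hm1 : (1 : K) < m := by exact_mod_cast hm
  have hr1 : (1 : K) < r := by exact_mod_cast (Nat.prime_of_mem_primeFactors hr).one_lt
  have hrest :
      ∏ p ∈ n.primeFactors.erase r, f p ≤ (m / (m - 1)) ^ (n.primeFactors.card - 1) := by
    rw [← Finset.card_erase_of_mem hr, ← Finset.prod_const]
    refine Finset.prod_le_prod (fun p hp => (hf_pos p (Finset.mem_of_mem_erase hp)).le)
      fun p hp => ?_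
    obtain ⟨hpr, hp⟩ := Finset.mem_erase.1 hp
    have hmp : (m : K) ≤ p := by exact_mod_cast hle p hp hpr
    calc f p ≤ p / (p - 1) :=
          (sigma_one_prime_pow_div_lt (Nat.prime_of_mem_primeFactors hp) _).le
      _ ≤ m / (m - 1) := by rw [div_le_div_iff₀ (by linarith) (by linarith)]; linarith
  rw [sigma_one_div_eq_prod_primeFactors (Nat.mem_primeFactors.1 hr).2.2,
    ← Finset.mul_prod_erase _ _ hr]
  exact mul_lt_mul (sigma_one_prime_pow_div_lt (Nat.prime_of_mem_primeFactors hr) _) hrest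
    (Finset.prod_pos fun p hp => hf_pos p (Finset.mem_of_mem_erase hp))
    (div_pos (by linarith) (by linarith)).le

end OrderedField

theorem one_add_inv_two_mul_pow_le {a t : ℕ} (h : 7 * t ≤ 3 * a) :
    (1 + (2 * a : ℚ)⁻¹) ^ t ≤ 14 / 11 := by
  rcases a.eq_zero_or_pos with rfl | ha
  · obtain rfl : t = 0 := by omega
    norm_num
  have htx : (t : ℚ) * (2 * a : ℚ)⁻¹ ≤ 3 / 14 := by
    rw [← div_eq_mul_inv, div_le_iff₀ (by positivity)]
    have : (7 * t : ℚ) ≤ 3 * a := by exact_mod_cast h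
    linarith
  calc _ ≤ (1 - t * (2 * a : ℚ)⁻¹)⁻¹ :=
        one_add_pow_le_inv_one_sub_mul (by positivity) (by linarith)
    _ ≤ (11 / 14)⁻¹ := by gcongr; linarith
    _ = 14 / 11 := by norm_num

theorem not_friend_of_large_second_prime_general (n : ℕ)
    (h5 : 5 ∣ n) (q₂ : ℕ) (hq₂ : q₂ ∈ n.primeFactors)
    (hsecond : (n.primeFactors.filter (· < q₂)).card = 1)
    (hbig : Nat.nth Nat.Prime ((⌈(7 * (n.primeFactors.card : ℚ)) / 3⌉).toNat - 1) ≤ q₂) :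
    (σ 1 n : ℚ) / n < 25 / 14 ∧ (σ 1 n : ℚ) / n ≠ 9 / 5 := by
  set w := n.primeFactors.card
  have h5S : 5 ∈ n.primeFactors :=
    Nat.prime_five.mem_primeFactors h5 (Nat.mem_primeFactors.1 hq₂).2.2
  have hw : 1 < w :=
    hsecond ▸ Finset.card_lt_card (Finset.filter_ssubset.2 ⟨q₂, hq₂, lt_irrefl q₂⟩)
  set a := ⌈(7 * (w : ℚ)) / 3⌉.toNat - 1 with ha
  have hwa : 7 * w ≤ 3 * (a + 1) := by
    have hc : (7 * w : ℚ) ≤ 3 * ⌈(7 * (w : ℚ)) / 3⌉₊ := by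
      linarith [Nat.le_ceil ((7 * (w : ℚ)) / 3)]
    have hc' : 7 * w ≤ 3 * ⌈(7 * (w : ℚ)) / 3⌉₊ := by exact_mod_cast hc
    rw [ha, Int.ceil_toNat]
    omega
  have hq₂a : 2 * a + 1 ≤ q₂ := (Nat.two_mul_add_one_le_nth_prime_s18 a).trans hbig
  have hle := Finset.le_of_card_filter_lt_eq_one hsecond h5S (by omega)
  have hbound := sigma_one_div_lt_of_forall_le (K := ℚ) h5S (m := 2 * a + 1) (by omega)
    fun p hp hp5 => hq₂a.trans (hle p hp hp5)
  have hlt : (σ 1 n : ℚ) / n < 35 / 22 := by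
    have ha0 : (a : ℚ) ≠ 0 := by norm_cast; omega
    calc _ < _ := hbound
      _ = 5 / 4 * (1 + (2 * a : ℚ)⁻¹) ^ (w - 1) := by push_cast; field_simp; ring
      _ ≤ 5 / 4 * (14 / 11) := by gcongr; exact one_add_inv_two_mul_pow_le (by omega)
      _ = 35 / 22 := by norm_num
  exact ⟨by linarith, fun h => by linarith⟩

theorem not_friend_of_large_second_prime (n : ℕ) (hn : 0 < n) (hodd : Odd n)
    (h5 : 5 ∣ n) (q₂ : ℕ) (hq₂ : q₂ ∈ n.primeFactors)
    (hsecond : (n.primeFactors.filter (· < q₂)).card = 1)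
    (hbig : Nat.nth Nat.Prime ((⌈(7 * (n.primeFactors.card : ℚ)) / 3⌉).toNat - 1) ≤ q₂) :
    (σ 1 n : ℚ) / n < 25 / 14 ∧ (σ 1 n : ℚ) / n ≠ 9 / 5 :=
  not_friend_of_large_second_prime_general n h5 q₂ hq₂ hsecond hbig
end

section
/- Let k ≥ 2 and let q be a prime with q ≥ p_{⌈7k/3⌉}, where p_j denotes the j-th prime. Then (5/4) · ∏_{i=0}^{k-2} p_{⌈7k/3⌉+i}/(p_{⌈7k/3⌉+i} - 1) < 25/14. -/
open Finset

/-
For x ≥ a > 1 the factor x / (x - 1) is at most a / (a - 1), and the j-th prime (0-indexed) is at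
least j + 2. So the product of the k - 1 factors starting at the m-th prime is dominated by the
telescoping product ∏ (m + i + 2) / (m + i + 1) = (m + k) / (m + 1), which stays below 10/7
because 7k ≤ 3(m + 1) when the first prime is p_⌈7k/3⌉.
-/

lemma div_sub_one_le_div_sub_one {a x : ℝ} (ha : 1 < a) (hax : a ≤ x) :
    x / (x - 1) ≤ a / (a - 1) := by
  rw [div_le_div_iff₀ (by linarith) (by linarith)]
  linarith

lemma prod_div_sub_one_le_of_add_two_le {p : ℕ → ℝ} (hp : ∀ i : ℕ, (i : ℝ) + 2 ≤ p i) (m n : ℕ) :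
    ∏ i ∈ range n, p (m + i) / (p (m + i) - 1) ≤ (m + n + 1) / (m + 1) := by
  induction n with
  | zero => simp [div_self (by positivity : (m : ℝ) + 1 ≠ 0)]
  | succ n ih =>
    have hpn : (m : ℝ) + n + 1 + 1 ≤ p (m + n) := by
      have := hp (m + n)
      push_cast at this
      linarith
    have hterm : p (m + n) / (p (m + n) - 1) ≤ (m + n + 1 + 1) / (m + n + 1 + 1 - 1) :=
      div_sub_one_le_div_sub_one (lt_add_of_pos_left 1 (by positivity)) hpn
    rw [prod_range_succ]
    calc (∏ i ∈ range n, p (m + i) / (p (m + i) - 1)) * (p (m + n) / (p (m + n) - 1))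
        ≤ (m + n + 1) / (m + 1) * ((m + n + 1 + 1) / (m + n + 1 + 1 - 1)) :=
          mul_le_mul ih hterm (div_nonneg (by linarith) (by linarith)) (by positivity)
      _ = (m + (n + 1 : ℕ) + 1) / (m + 1) := by
          rw [add_sub_cancel_right (m + n + 1 : ℝ) 1]
          push_cast
          field_simp
          ring

lemma le_ceil_toNat {α : Type*} [Ring α] [LinearOrder α] [IsStrictOrderedRing α] [FloorRing α]
    (x : α) : x ≤ (⌈x⌉.toNat : α) := by
  rw [Int.ceil_toNat]
  exact Nat.le_ceil x

theorem prod_ratio_bound_general (k : ℕ) :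
    (5 / 4 : ℝ) * ∏ i ∈ Finset.range (k - 1),
        (Nat.nth Nat.Prime ((⌈(7 * k : ℚ) / 3⌉).toNat - 1 + i) : ℝ) /
          ((Nat.nth Nat.Prime ((⌈(7 * k : ℚ) / 3⌉).toNat - 1 + i) : ℝ) - 1) <
      25 / 14 := by
  set m := (⌈(7 * k : ℚ) / 3⌉).toNat - 1
  have h7k : 7 * k ≤ 3 * (m + 1) := by
    have hceil : (7 * k : ℚ) / 3 ≤ (⌈(7 * k : ℚ) / 3⌉.toNat : ℚ) := le_ceil_toNat _
    have : 7 * k ≤ 3 * (⌈(7 * k : ℚ) / 3⌉).toNat := by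
      exact_mod_cast (div_le_iff₀' (by norm_num : (0 : ℚ) < 3)).1 hceil
    omega
  have hlen : 7 * (k - 1) < 3 * (m + 1) := by omega
  have hbound : ((m : ℝ) + (k - 1 : ℕ) + 1) / (m + 1) < 10 / 7 := by
    have hlenR : (7 : ℝ) * (k - 1 : ℕ) < 3 * (m + 1) := by exact_mod_cast hlen
    rw [div_lt_iff₀ (by positivity)]
    linarith
  have hprod := prod_div_sub_one_le_of_add_two_le (p := fun i => (Nat.nth Nat.Prime i : ℝ))
    (fun i => by exact_mod_cast Nat.add_two_le_nth_prime i) m (k - 1)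
  calc (5 / 4 : ℝ) * ∏ i ∈ range (k - 1),
        (Nat.nth Nat.Prime (m + i) : ℝ) / ((Nat.nth Nat.Prime (m + i) : ℝ) - 1)
      < 5 / 4 * (10 / 7) := by gcongr; exact hprod.trans_lt hbound
    _ = 25 / 14 := by norm_num

theorem prod_ratio_bound (k : ℕ) (hk : 2 ≤ k) (q : ℕ) (hq : q.Prime)
    (hqge : Nat.nth Nat.Prime ((⌈(7 * k : ℚ) / 3⌉).toNat - 1) ≤ q) :
    (5 / 4 : ℝ) * ∏ i ∈ Finset.range (k - 1),
        (Nat.nth Nat.Prime ((⌈(7 * k : ℚ) / 3⌉).toNat - 1 + i) : ℝ) /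
          ((Nat.nth Nat.Prime ((⌈(7 * k : ℚ) / 3⌉).toNat - 1 + i) : ℝ) - 1) <
      25 / 14 :=
  prod_ratio_bound_general k
end
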